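/- arXiv:2105.05339 — 2 statements merged into one kernel-verified Lean document; each statement's English description precedes it below -/
import Mathlib

section
/- For every infinite index set κ there exists a Boolean automorphism φ of the measure algebra M_κ which is measure-preserving, i.e. λ_κ(φ(A)) = λ_κ(A) for every A ∈ M_κ, and such that for all A, B ∈ M_κ with A ≠ ⊥ and B ≠ ⊥ there exists n ∈ ω with φ^n(A) ⊓ B ≠ ⊥. -/
open MeasureTheory Set Filter Topology
open scoped symmDiff ENNReal

noncomputable section

universe u v

/-- The two-element set `{0,1}`, as an additive group (addition mod 2) with the
discrete topology. -/
inductive Two : Type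
  | zero
  | one
  deriving DecidableEq

instance instFintypeTwo : Fintype Two :=
  ⟨{Two.zero, Two.one}, fun x => by cases x <;> simp⟩

instance : Zero Two := ⟨Two.zero⟩
instance : One Two := ⟨Two.one⟩

/-- Addition modulo 2 on `{0,1}`. -/
def Two.add : Two → Two → Two
  | Two.zero, x => x
  | Two.one, Two.zero => Two.one
  | Two.one, Two.one => Two.zero

instance : Add Two := ⟨Two.add⟩
instance : Neg Two := ⟨fun x => x⟩

instance : AddCommGroup Two where
  add := (· + ·)
  zero := Two.zero
  neg := (- ·)
  add_assoc := by decide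
  zero_add := by decide
  add_zero := by decide
  neg_add_cancel := by decide
  add_comm := by decide
  nsmul := nsmulRec
  zsmul := zsmulRec

instance : TopologicalSpace Two := ⊥
instance : DiscreteTopology Two := ⟨rfl⟩

instance : IsTopologicalAddGroup Two where
  continuous_add := continuous_of_discreteTopology
  continuous_neg := continuous_of_discreteTopology

/-- The Cantor cube `{0,1}^κ`, with the product topology. -/
abbrev Cube (κ : Type u) : Type u := κ → Two

instance (κ : Type u) : MeasurableSpace (Cube κ) := borel _

instance (κ : Type u) : BorelSpace (Cube κ) := ⟨rfl⟩

/-- The fair-coin product measure `λ_κ` on `{0,1}^κ`: the Haar measure of the compact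
group `{0,1}^κ`, normalized so that the whole space has measure `1`. -/
def lam (κ : Type u) : Measure (Cube κ) :=
  Measure.addHaarMeasure ⟨⟨Set.univ, isCompact_univ⟩, by simpa using Set.univ_nonempty⟩

/-- The Boolean algebra of measurable subsets of `X`. -/
abbrev MSet (X : Type u) [MeasurableSpace X] : Type u := {s : Set X // MeasurableSet s}

/-- The ideal of `μ`-null sets in the Boolean ring of measurable subsets of `X`. -/
def nullIdeal {X : Type u} [MeasurableSpace X] (μ : Measure X) :
    Ideal (AsBoolRing (MSet X)) where
  carrier := {s | μ (ofBoolRing s : MSet X).1 = 0}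
  zero_mem' := by
    show μ (ofBoolRing (0 : AsBoolRing (MSet X)) : MSet X).1 = 0
    rw [ofBoolRing_zero]
    simpa using measure_empty (μ := μ)
  add_mem' := by
    intro a b ha hb
    show μ (ofBoolRing (a + b) : MSet X).1 = 0
    rw [ofBoolRing_add]
    refine le_antisymm ?_ (by simp)
    calc μ ((ofBoolRing a ∆ ofBoolRing b : MSet X) : Set X)
        ≤ μ (((ofBoolRing a : MSet X) : Set X) ∪ ((ofBoolRing b : MSet X) : Set X)) := by
          refine measure_mono ?_
          simp only [symmDiff_def, MeasurableSet.sup_eq_union, MeasurableSet.coe_union,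
            MeasurableSet.coe_sdiff]
          exact Set.union_subset_union Set.diff_subset Set.diff_subset
      _ ≤ μ ((ofBoolRing a : MSet X) : Set X) + μ ((ofBoolRing b : MSet X) : Set X) :=
          measure_union_le _ _
      _ = 0 := by rw [ha, hb, add_zero]
  smul_mem' := by
    intro c x hx
    show μ (ofBoolRing (c * x) : MSet X).1 = 0
    rw [ofBoolRing_mul]
    refine le_antisymm ?_ (by simp)
    calc μ ((ofBoolRing c ⊓ ofBoolRing x : MSet X) : Set X)
        ≤ μ ((ofBoolRing x : MSet X) : Set X) := by
          refine measure_mono ?_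
          simp only [MeasurableSet.inf_eq_inter, MeasurableSet.coe_inter]
          exact Set.inter_subset_right
      _ = 0 := hx

instance {X : Type u} [MeasurableSpace X] (μ : Measure X) :
    BooleanRing (AsBoolRing (MSet X) ⧸ nullIdeal μ) where
  isIdempotentElem a := by
    obtain ⟨x, rfl⟩ := Ideal.Quotient.mk_surjective a
    show _ * _ = _
    rw [← map_mul]
    exact congrArg _ (BooleanRing.mul_self x)

/-- The measure algebra of the measure `μ`: measurable sets modulo `μ`-null sets,
as a Boolean algebra.  For `μ = lam κ` this is the measure algebra `M_κ`. -/
abbrev MAlg (X : Type u) [MeasurableSpace X] (μ : Measure X) : Type u :=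
  AsBoolAlg (AsBoolRing (MSet X) ⧸ nullIdeal μ)

/-- The class of a measurable set in the measure algebra. -/
def MAlg.mk {X : Type u} [MeasurableSpace X] (μ : Measure X) (s : MSet X) : MAlg X μ :=
  toBoolAlg (Ideal.Quotient.mk (nullIdeal μ) (toBoolRing s))

/-- The measure induced by `μ` on its measure algebra `MAlg X μ` (with real values). -/
def mval {X : Type u} [MeasurableSpace X] (μ : Measure X) (a : MAlg X μ) : ℝ :=
  Quotient.liftOn' (ofBoolAlg a) (fun s => (μ (ofBoolRing s : MSet X).1).toReal)
    (by
      intro s t h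
      have hst : s - t ∈ nullIdeal μ := by
        rwa [Submodule.quotientRel_def] at h
      have h0 : μ (((ofBoolRing s : MSet X) : Set X) ∆ ((ofBoolRing t : MSet X) : Set X)) = 0 := by
        have hn : μ ((ofBoolRing (s - t) : MSet X) : Set X) = 0 := hst
        rw [ofBoolRing_sub] at hn
        simpa only [symmDiff_def, MeasurableSet.sup_eq_union, MeasurableSet.coe_union,
          MeasurableSet.coe_sdiff, Set.sup_eq_union] using hn
      have hc := measure_congr (μ := μ) (MeasureTheory.measure_symmDiff_eq_zero_iff.mp h0)
      simp only [hc])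

/-!
Let `σ` be a permutation of `κ` without finite orbits (the shift `(k, i) ↦ (k + 1, i)`
transported along `κ ≃ ℤ × κ`), and let `φ` be the automorphism of `M_κ` induced by relabelling
coordinates along `σ`; it preserves `λ_κ` by uniqueness of the normalized Haar measure. By
regularity of `λ_κ`, two sets `A`, `B` of positive measure are approximated, up to `ε`, by sets
`C`, `D` that depend only on finitely many coordinates `F`, `G`. Some power `σ^n` moves `F ∪ G`
off itself, so that `φ^n C` and `D` depend on disjoint sets of coordinates and are independent.
Hence `λ(φ^n A ∩ B) ≥ λ(A) λ(B) - O(ε) > 0`.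
-/

open TopologicalSpace in
theorem TopologicalSpace.IsTopologicalBasis.exists_measure_symmDiff_sUnion_lt
    {X : Type*} [TopologicalSpace X] [T2Space X] [MeasurableSpace X] [OpensMeasurableSpace X]
    {μ : Measure X} [IsFiniteMeasure μ] [μ.OuterRegular] [μ.InnerRegularCompactLTTop]
    {B : Set (Set X)} (hB : IsTopologicalBasis B) {A : Set X} (hA : MeasurableSet A)
    {ε : ℝ≥0∞} (hε : ε ≠ 0) :
    ∃ S ⊆ B, S.Finite ∧ μ (A ∆ ⋃₀ S) < ε := by
  obtain ⟨U, hAU, hUo, -, hUA⟩ :=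
    hA.exists_isOpen_sdiff_lt (measure_ne_top μ A) (ENNReal.half_pos hε).ne'
  obtain ⟨K, hKU, hKc, hUK⟩ :=
    hUo.measurableSet.exists_isCompact_sdiff_lt (measure_ne_top μ U) (ENNReal.half_pos hε).ne'
  obtain ⟨S, hSB, hSfin, hKS⟩ := hKc.elim_finite_subcover_image (b := {s ∈ B | s ⊆ U})
    (c := id) (fun s hs => hB.isOpen hs.1)
    (hKU.trans ((hB.open_eq_sUnion' hUo).trans sUnion_eq_biUnion).subset)
  have hSU : ⋃₀ S ⊆ U := sUnion_subset fun s hs => (hSB hs).2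
  refine ⟨S, fun s hs => (hSB hs).1, hSfin, ?_⟩
  have hsub : A ∆ ⋃₀ S ⊆ (U \ A) ∪ (U \ K) := by
    rintro x (⟨hxA, hxS⟩ | ⟨hxS, hxA⟩)
    · exact Or.inr ⟨hAU hxA, fun hxK => hxS (by simpa [sUnion_eq_biUnion] using hKS hxK)⟩
    · exact Or.inl ⟨hSU hxS, hxA⟩
  calc μ (A ∆ ⋃₀ S)
      ≤ μ (U \ A) + μ (U \ K) := (measure_mono hsub).trans (measure_union_le _ _)
    _ < ε / 2 + ε / 2 := ENNReal.add_lt_add hUA hUK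
    _ = ε := ENNReal.add_halves ε

section Mixing

variable {X : Type*} [MeasurableSpace X] {μ : Measure X} {A B C D : Set X}

lemma abs_measureReal_inter_sub_le [IsFiniteMeasure μ] (hA : MeasurableSet A)
    (hB : MeasurableSet B) (hC : MeasurableSet C) (hD : MeasurableSet D) :
    |μ.real (A ∩ B) - μ.real (C ∩ D)| ≤ μ.real (A ∆ C) + μ.real (B ∆ D) :=
  calc |μ.real (A ∩ B) - μ.real (C ∩ D)| ≤ μ.real ((A ∩ B) ∆ (C ∩ D)) :=
        abs_measureReal_sub_le_measureReal_symmDiff (hA.inter hB).nullMeasurableSet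
          (hC.inter hD).nullMeasurableSet
    _ ≤ μ.real (A ∆ C ∪ B ∆ D) := by
        refine measureReal_mono fun x => ?_
        simp only [mem_symmDiff, mem_inter_iff, mem_union]
        tauto
    _ ≤ μ.real (A ∆ C) + μ.real (B ∆ D) := measureReal_union_le _ _

lemma measureReal_inter_pos_of_approx_indep [IsProbabilityMeasure μ] (hA : MeasurableSet A)
    (hB : MeasurableSet B) (hC : MeasurableSet C) (hD : MeasurableSet D)
    (hA₀ : 0 < μ.real A) (hB₀ : 0 < μ.real B)
    (hCD : μ.real (C ∩ D) = μ.real C * μ.real D)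
    (hAC : μ.real (A ∆ C) ≤ μ.real A * μ.real B / 8)
    (hBD : μ.real (B ∆ D) ≤ μ.real A * μ.real B / 8) :
    0 < μ.real (A ∩ B) := by
  have hinter := abs_measureReal_inter_sub_le (μ := μ) hA hB hC hD
  have hAC' := abs_measureReal_sub_le_measureReal_symmDiff (μ := μ) hA.nullMeasurableSet
    hC.nullMeasurableSet
  have hBD' := abs_measureReal_sub_le_measureReal_symmDiff (μ := μ) hB.nullMeasurableSet
    hD.nullMeasurableSet
  rw [abs_le] at hinter hAC' hBD'
  have hA₁ : μ.real A ≤ 1 := measureReal_le_one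
  have hB₁ : μ.real B ≤ 1 := measureReal_le_one
  set a := μ.real A
  set b := μ.real B
  set ε := a * b / 8 with hε
  have hεa : ε ≤ a / 8 := by rw [hε]; nlinarith
  have hεb : ε ≤ b / 8 := by rw [hε]; nlinarith
  have hcd : (a - ε) * (b - ε) ≤ μ.real C * μ.real D :=
    mul_le_mul (by linarith) (by linarith) (by linarith) measureReal_nonneg
  -- `μ (A ∩ B) ≥ μ C * μ D - 2 ε ≥ (a - ε) * (b - ε) - 2 ε ≥ a * b - 4 ε = a * b / 2`
  nlinarith [mul_pos hA₀ hB₀]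

end Mixing

section FreePermutation

variable {α : Type*}

lemma exists_iterate_forall_notMem {σ : α → α}
    (hσ : ∀ i, Function.Injective fun n : ℕ => σ^[n] i) (H : Finset α) :
    ∃ n : ℕ, ∀ i ∈ H, σ^[n] i ∉ H := by
  have hfin : (⋃ i ∈ H, (fun n : ℕ => σ^[n] i) ⁻¹' H).Finite :=
    H.finite_toSet.biUnion fun i _ => H.finite_toSet.preimage (hσ i).injOn
  obtain ⟨n, hn⟩ := hfin.exists_notMem
  simp only [mem_iUnion, not_exists] at hn
  exact ⟨n, hn⟩

lemma exists_perm_injective_iterate (α : Type*) [Infinite α] :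
    ∃ σ : Equiv.Perm α, ∀ i, Function.Injective fun n : ℕ => σ^[n] i := by
  have hcard : Cardinal.mk α = Cardinal.mk (ℤ × α) := by
    rw [Cardinal.mk_prod, Cardinal.mk_int, Cardinal.lift_aleph0, Cardinal.lift_uzero,
      Cardinal.aleph0_mul_mk_eq]
  obtain ⟨e⟩ := Cardinal.eq.1 hcard
  let σ : Equiv.Perm α := (e.trans ((Equiv.addRight 1).prodCongr (Equiv.refl α))).trans e.symm
  have hσ : ∀ i, e (σ i) = ((e i).1 + 1, (e i).2) := fun i => by simp [σ, Prod.map]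
  have hiter : ∀ (n : ℕ) i, e (σ^[n] i) = ((e i).1 + n, (e i).2) := by
    intro n i
    induction n with
    | zero => simp
    | succ n ih => rw [Function.iterate_succ_apply', hσ, ih, Nat.cast_succ, add_assoc]
  exact ⟨σ, fun i m n hmn => by simpa [hiter] using congrArg (fun j => (e j).1) hmn⟩

end FreePermutation

section MeasureAlgebra

def RingEquiv.asBoolAlg {α β : Type*} [BooleanRing α] [BooleanRing β] (e : α ≃+* β) :
    AsBoolAlg α ≃o AsBoolAlg β where
  toEquiv := ofBoolAlg.trans (e.toEquiv.trans toBoolAlg)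
  map_rel_iff' {a b} := by
    simp only [← ofBoolAlg_mul_ofBoolAlg_eq_left_iff, Equiv.trans_apply, ofBoolAlg_toBoolAlg,
      RingEquiv.toEquiv_eq_coe, EquivLike.coe_coe, ← map_mul, e.injective.eq_iff]

def OrderIso.asBoolRing {α β : Type*} [BooleanAlgebra α] [BooleanAlgebra β] (e : α ≃o β) :
    AsBoolRing α ≃+* AsBoolRing β :=
  RingEquiv.ofRingHom (e : BoundedLatticeHom α β).asBoolRing
    (e.symm : BoundedLatticeHom β α).asBoolRing
    (RingHom.ext fun a => by simp [BoundedLatticeHom.asBoolRing])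
    (RingHom.ext fun a => by simp [BoundedLatticeHom.asBoolRing])

variable {X Y : Type*} [MeasurableSpace X] [MeasurableSpace Y]

def MeasurableEquiv.preimageMSet (T : X ≃ᵐ Y) : MSet Y ≃o MSet X where
  toFun s := ⟨T ⁻¹' s, T.measurable s.2⟩
  invFun s := ⟨T.symm ⁻¹' s, T.symm.measurable s.2⟩
  left_inv s := Subtype.ext (T.toEquiv.symm_preimage_preimage s.1)
  right_inv s := Subtype.ext (T.toEquiv.preimage_symm_preimage s.1)
  map_rel_iff' := T.surjective.preimage_subset_preimage_iff

variable {μ : Measure X} {ν : Measure Y}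

lemma MeasureTheory.MeasurePreserving.map_nullIdeal {T : X ≃ᵐ Y}
    (hT : MeasurePreserving T μ ν) :
    (nullIdeal ν).map (T.preimageMSet.asBoolRing : AsBoolRing (MSet Y) →+* AsBoolRing (MSet X))
      = nullIdeal μ := by
  ext a
  rw [Ideal.map_comap_of_equiv, Ideal.mem_comap]
  exact iff_of_eq <| congrArg (· = 0) <|
    (hT.symm T).measure_preimage (ofBoolRing a : MSet X).2.nullMeasurableSet

def MeasurableEquiv.preimageMAlg (T : X ≃ᵐ Y) (hT : MeasurePreserving T μ ν) :
    MAlg Y ν ≃o MAlg X μ :=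
  (Ideal.quotientEquiv _ _ _ hT.map_nullIdeal.symm).asBoolAlg

lemma MeasurableEquiv.preimageMAlg_mk (T : X ≃ᵐ Y) (hT : MeasurePreserving T μ ν)
    (s : MSet Y) :
    T.preimageMAlg hT (MAlg.mk ν s) = MAlg.mk μ (T.preimageMSet s) := by
  simp [MeasurableEquiv.preimageMAlg, MAlg.mk, RingEquiv.asBoolAlg, OrderIso.asBoolRing]

lemma MAlg.mk_surjective : Function.Surjective (MAlg.mk μ) := fun a => by
  obtain ⟨r, hr⟩ := Ideal.Quotient.mk_surjective (ofBoolAlg a)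
  exact ⟨ofBoolRing r, by rw [MAlg.mk, toBoolRing_ofBoolRing, hr, toBoolAlg_ofBoolAlg]⟩

lemma MAlg.mk_eq_bot_iff {s : MSet X} : MAlg.mk μ s = ⊥ ↔ μ s = 0 := by
  rw [MAlg.mk, show (⊥ : MAlg X μ) = toBoolAlg 0 from rfl, toBoolAlg_inj,
    Ideal.Quotient.eq_zero_iff_mem]
  rfl

lemma MAlg.mk_inf (s t : MSet X) : MAlg.mk μ s ⊓ MAlg.mk μ t = MAlg.mk μ (s ⊓ t) := by
  rw [MAlg.mk, MAlg.mk, MAlg.mk, toBoolRing_inf, map_mul, toBoolAlg_mul]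

lemma mval_mk (s : MSet X) : mval μ (MAlg.mk μ s) = μ.real s := rfl

lemma mval_preimageMAlg {T : X ≃ᵐ Y} (hT : MeasurePreserving T μ ν) (a : MAlg Y ν) :
    mval μ (T.preimageMAlg hT a) = mval ν a := by
  obtain ⟨s, rfl⟩ := MAlg.mk_surjective a
  rw [T.preimageMAlg_mk, mval_mk, mval_mk]
  exact hT.measureReal_preimage s.2.nullMeasurableSet

lemma iterate_preimageMAlg_mk {T : X ≃ᵐ X} (hT : MeasurePreserving T μ μ) (n : ℕ) (s : MSet X) :
    (T.preimageMAlg hT)^[n] (MAlg.mk μ s) =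
      MAlg.mk μ ⟨T^[n] ⁻¹' s, (hT.iterate n).measurable s.2⟩ := by
  induction n generalizing s with
  | zero => rfl
  | succ n ih =>
    rw [Function.iterate_succ_apply, T.preimageMAlg_mk, ih]
    congr 2
    rw [Function.iterate_succ', preimage_comp]
    rfl

end MeasureAlgebra

section Cube

variable {κ : Type u}

instance : IsProbabilityMeasure (lam κ) :=
  ⟨Measure.addHaarMeasure_self⟩

instance : (lam κ).IsAddHaarMeasure := by
  unfold lam; infer_instance

def cubePerm (σ : Equiv.Perm κ) : Cube κ ≃ₜ Cube κ where
  toFun x := x ∘ σ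
  invFun x := x ∘ σ.symm
  left_inv x := by ext; simp
  right_inv x := by ext; simp

lemma measurePreserving_cubePerm (σ : Equiv.Perm κ) :
    MeasurePreserving (cubePerm σ) (lam κ) (lam κ) :=
  (AddMonoidHom.mk' (cubePerm σ) fun _ _ => rfl).measurePreserving (cubePerm σ).continuous
    (cubePerm σ).surjective rfl

lemma dependsOn_mem_union {C D : Set (Cube κ)} {s t : Set κ} (hC : DependsOn (· ∈ C) s)
    (hD : DependsOn (· ∈ D) t) : DependsOn (· ∈ C ∪ D) (s ∪ t) := fun x y hxy => by
  simp only [mem_union, hC.mono subset_union_left hxy, hD.mono subset_union_right hxy]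

lemma dependsOn_mem_sUnion {S : Set (Set (Cube κ))} (hS : S.Finite)
    (h : ∀ C ∈ S, ∃ F : Finset κ, DependsOn (· ∈ C) (F : Set κ)) :
    ∃ F : Finset κ, DependsOn (· ∈ ⋃₀ S) (F : Set κ) := by
  classical
  induction S, hS using Set.Finite.induction_on with
  | empty => exact ⟨∅, fun _ _ _ => by simp⟩
  | @insert C S _ _ ih =>
    obtain ⟨F, hF⟩ := h C (mem_insert C S)
    obtain ⟨G, hG⟩ := ih fun D hD => h D (mem_insert_of_mem C hD)
    exact ⟨F ∪ G, by rw [sUnion_insert, Finset.coe_union]; exact dependsOn_mem_union hF hG⟩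

lemma dependsOn_mem_preimage_comp [DecidableEq κ] {C : Set (Cube κ)} {F : Finset κ}
    (hC : DependsOn (· ∈ C) (F : Set κ)) (g : κ → κ) :
    DependsOn (· ∈ (· ∘ g) ⁻¹' C) (F.image g : Set κ) := fun _ _ hxy =>
  hC fun i hi => hxy (g i) (Finset.mem_coe.2 (Finset.mem_image_of_mem g hi))

lemma exists_dependsOn_measureReal_symmDiff_lt {A : Set (Cube κ)}
    (hA : MeasurableSet A) {ε : ℝ} (hε : 0 < ε) :
    ∃ (F : Finset κ) (C : Set (Cube κ)),
      DependsOn (· ∈ C) (F : Set κ) ∧ MeasurableSet C ∧ (lam κ).real (A ∆ C) < ε := by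
  have hB :=
    isTopologicalBasis_pi fun _ : κ => TopologicalSpace.isTopologicalBasis_opens (α := Two)
  obtain ⟨S, hSB, hSfin, hAS⟩ :=
    hB.exists_measure_symmDiff_sUnion_lt (μ := lam κ) hA (ENNReal.ofReal_pos.2 hε).ne'
  obtain ⟨F, hF⟩ := dependsOn_mem_sUnion hSfin fun C hC => by
    obtain ⟨U, F, -, rfl⟩ := hSB hC
    exact ⟨F, fun x y hxy => by simp only [Set.mem_pi]; grind⟩
  refine ⟨F, ⋃₀ S, hF, (isOpen_sUnion fun C hC => hB.isOpen (hSB hC)).measurableSet,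
    ENNReal.toReal_lt_of_lt_ofReal hAS⟩

lemma measurableSet_restrict_preimage (F : Finset κ) (P : Set ((i : F) → Two)) :
    MeasurableSet (F.restrict ⁻¹' P : Set (Cube κ)) :=
  ((isOpen_discrete P).preimage (Finset.continuous_restrict F)).measurableSet

lemma DependsOn.eq_restrict_preimage_image {C : Set (Cube κ)} {F : Finset κ}
    (hC : DependsOn (· ∈ C) (F : Set κ)) : C = F.restrict ⁻¹' (F.restrict '' C) := by
  refine (subset_preimage_image _ _).antisymm fun x ⟨y, hy, hyx⟩ => ?_
  have : y ∈ C ↔ x ∈ C := iff_of_eq <| hC fun i hi => congrFun hyx ⟨i, hi⟩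
  exact this.1 hy

/-- Translating by a pattern extended by zero off `F` permutes the fibres of `F.restrict` and
fixes `D`, so all fibres meet `D` in the same measure. -/
lemma lam_restrict_preimage_singleton_inter {F G : Finset κ} (hFG : Disjoint F G)
    {D : Set (Cube κ)} (hD : DependsOn (· ∈ D) (G : Set κ)) (p : (i : F) → Two) :
    lam κ (F.restrict ⁻¹' {p} ∩ D) = lam κ D / 2 ^ F.card := by
  classical
  have htrans : ∀ q, lam κ (F.restrict ⁻¹' {q} ∩ D) = lam κ (F.restrict ⁻¹' {0} ∩ D) := by
    intro q
    let v : Cube κ := fun i => if h : i ∈ F then q ⟨i, h⟩ else 0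
    have hv : ∀ i ∈ G, v i = 0 := fun i hi => dif_neg (Finset.disjoint_right.1 hFG hi)
    suffices (F.restrict ⁻¹' {q} : Set (Cube κ)) ∩ D =
        (v + ·) ⁻¹' ((F.restrict ⁻¹' {0} : Set (Cube κ)) ∩ D) by
      rw [this, measure_preimage_add]
    ext x
    have hxD : (v + x ∈ D) = (x ∈ D) := hD fun i hi => by simp [hv i hi]
    simp only [mem_inter_iff, mem_preimage, mem_singleton_iff, hxD, funext_iff,
      Finset.restrict, Pi.add_apply, Pi.zero_apply, v, add_eq_zero_iff_eq_neg]
    exact and_congr_left' (forall_congr' fun i => by rw [dif_pos i.2]; exact eq_comm)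
  have hsum : ∑ p, lam κ (F.restrict ⁻¹' {p} ∩ D) = lam κ D := by
    have := sum_measure_preimage_singleton (μ := (lam κ).restrict D) Finset.univ
      (f := F.restrict) fun p _ => measurableSet_restrict_preimage F {p}
    simpa [Measure.restrict_apply (measurableSet_restrict_preimage F _)] using this
  rw [Finset.sum_congr rfl fun p _ => htrans p, Finset.sum_const, Finset.card_univ,
    Fintype.card_fun, Fintype.card_coe, nsmul_eq_mul] at hsum
  rw [htrans, ENNReal.eq_div_iff (by positivity) (by simp), ← hsum]
  norm_cast

lemma lam_restrict_preimage_inter {F G : Finset κ} (hFG : Disjoint F G)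
    {D : Set (Cube κ)} (hD : DependsOn (· ∈ D) (G : Set κ)) (P : Finset ((i : F) → Two)) :
    lam κ (F.restrict ⁻¹' P ∩ D) = P.card * (lam κ D / 2 ^ F.card) := by
  have := sum_measure_preimage_singleton (μ := (lam κ).restrict D) P
    (f := F.restrict) fun p _ => measurableSet_restrict_preimage F {p}
  simp only [Measure.restrict_apply (measurableSet_restrict_preimage F _),
    lam_restrict_preimage_singleton_inter hFG hD, Finset.sum_const, nsmul_eq_mul] at this
  exact this.symm

theorem lam_inter_of_disjoint {F G : Finset κ} (hFG : Disjoint F G) {C D : Set (Cube κ)}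
    (hC : DependsOn (· ∈ C) (F : Set κ)) (hD : DependsOn (· ∈ D) (G : Set κ)) :
    lam κ (C ∩ D) = lam κ C * lam κ D := by
  obtain ⟨P, hP⟩ := (toFinite (F.restrict '' C)).exists_finset_coe
  have hCP : C = F.restrict ⁻¹' P := hP ▸ hC.eq_restrict_preimage_image
  have hC' : lam κ C = P.card * (1 / 2 ^ F.card) := by
    simpa [← hCP] using lam_restrict_preimage_inter (Finset.disjoint_empty_right F)
      (D := univ) (fun _ _ _ => rfl) P
  rw [hC', hCP, lam_restrict_preimage_inter hFG hD, ENNReal.div_eq_inv_mul, one_div]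
  ring

lemma cubePerm_iterate (σ : Equiv.Perm κ) (n : ℕ) :
    (⇑(cubePerm σ))^[n] = (· ∘ (⇑σ)^[n]) := by
  induction n with
  | zero => rfl
  | succ n ih => rw [Function.iterate_succ, ih, Function.iterate_succ']; rfl

theorem exists_lam_preimage_iterate_inter_ne_zero {σ : Equiv.Perm κ}
    (hσ : ∀ i, Function.Injective fun n : ℕ => σ^[n] i) {A B : Set (Cube κ)}
    (hA : MeasurableSet A) (hB : MeasurableSet B) (hA₀ : lam κ A ≠ 0) (hB₀ : lam κ B ≠ 0) :
    ∃ n : ℕ, lam κ ((cubePerm σ)^[n] ⁻¹' A ∩ B) ≠ 0 := by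
  classical
  have hA₀' : 0 < (lam κ).real A := ENNReal.toReal_pos hA₀ (measure_ne_top _ _)
  have hB₀' : 0 < (lam κ).real B := ENNReal.toReal_pos hB₀ (measure_ne_top _ _)
  have hε : 0 < (lam κ).real A * (lam κ).real B / 8 := by positivity
  obtain ⟨F, C, hC, hCm, hAC⟩ := exists_dependsOn_measureReal_symmDiff_lt hA hε
  obtain ⟨G, D, hD, hDm, hBD⟩ := exists_dependsOn_measureReal_symmDiff_lt hB hε
  obtain ⟨n, hn⟩ := exists_iterate_forall_notMem hσ (F ∪ G)
  have hT := (measurePreserving_cubePerm σ).iterate n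
  have hdisj : Disjoint (F.image σ^[n]) G := Finset.disjoint_left.2 fun j hj hjG => by
    obtain ⟨i, hi, rfl⟩ := Finset.mem_image.1 hj
    exact hn i (Finset.mem_union_left G hi) (Finset.mem_union_right F hjG)
  have hindep :
      lam κ ((cubePerm σ)^[n] ⁻¹' C ∩ D) = lam κ ((cubePerm σ)^[n] ⁻¹' C) * lam κ D := by
    rw [cubePerm_iterate]
    exact lam_inter_of_disjoint hdisj (dependsOn_mem_preimage_comp hC _) hD
  refine ⟨n, (measureReal_ne_zero_iff).1 (measureReal_inter_pos_of_approx_indep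
    (hT.measurable hA) hB (hT.measurable hCm) hDm ?_ hB₀' ?_ ?_ ?_).ne'⟩
  · rwa [hT.measureReal_preimage hA.nullMeasurableSet]
  · simp only [measureReal_def, hindep, ENNReal.toReal_mul]
  · rw [← preimage_symmDiff, hT.measureReal_preimage (hA.symmDiff hCm).nullMeasurableSet,
      hT.measureReal_preimage hA.nullMeasurableSet]
    exact hAC.le
  · rw [hT.measureReal_preimage hA.nullMeasurableSet]
    exact hBD.le

end Cube

/-- For every infinite `κ` there is a measure-preserving Boolean automorphism `φ` of the
measure algebra `M_κ` which is "ergodic": any two nonzero elements meet after applying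
some power of `φ` to the first one. -/
theorem exists_ergodic_measure_preserving_automorphism (κ : Type u) [Infinite κ] :
    ∃ φ : MAlg (Cube κ) (lam κ) ≃o MAlg (Cube κ) (lam κ),
      (∀ a : MAlg (Cube κ) (lam κ), mval (lam κ) (φ a) = mval (lam κ) a) ∧
      ∀ a b : MAlg (Cube κ) (lam κ), a ≠ ⊥ → b ≠ ⊥ →
        ∃ n : ℕ, (fun x => φ x)^[n] a ⊓ b ≠ ⊥ := by
  obtain ⟨σ, hσ⟩ := exists_perm_injective_iterate κ
  let T : Cube κ ≃ᵐ Cube κ := (cubePerm σ).toMeasurableEquiv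
  have hT : MeasurePreserving T (lam κ) (lam κ) := measurePreserving_cubePerm σ
  refine ⟨T.preimageMAlg hT, mval_preimageMAlg hT, fun a b ha hb => ?_⟩
  obtain ⟨s, rfl⟩ := MAlg.mk_surjective a
  obtain ⟨t, rfl⟩ := MAlg.mk_surjective b
  obtain ⟨n, hn⟩ := exists_lam_preimage_iterate_inter_ne_zero hσ s.2 t.2
    (mt MAlg.mk_eq_bot_iff.2 ha) (mt MAlg.mk_eq_bot_iff.2 hb)
  refine ⟨n, ?_⟩
  change (T.preimageMAlg hT)^[n] _ ⊓ _ ≠ ⊥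
  rwa [iterate_preimageMAlg_mk, MAlg.mk_inf, Ne, MAlg.mk_eq_bot_iff]
end
end

section
/- Let (X, Σ) be a measurable space and let μ, ν be finite (countably additive) measures on Σ. Suppose ν is separable, i.e. the pseudometric space (Σ, d_ν) with d_ν(A,B) = ν(A Δ B) is separable, and suppose μ is nowhere separable: for every B ∈ Σ with μ(B) > 0, the restriction of μ to B is not separable (the pseudometric space ({A ∈ Σ : A ⊆ B}, d_μ) is not separable). Then μ and ν are mutually singular. -/
open MeasureTheory Set Filter Topology
open scoped symmDiff ENNReal

noncomputable section

universe u v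

/-!
Let `μ = μₛ + f • ν` be the Lebesgue decomposition of `μ` with respect to `ν`, and let `S` carry
`ν` while `μₛ S = 0`. On subsets of `S` the measure `μ` is `f • ν` with `∫ f dν < ∞`, hence
uniformly absolutely continuous with respect to `ν`; so a countable `ν`-dense family, intersected
with `S`, is `μ`-dense among the measurable subsets of `S`. Nowhere separability forces `μ S = 0`,
and `S` witnesses `μ ⟂ₘ ν`.
-/

namespace MeasureTheory.Measure

variable {X : Type*} [MeasurableSpace X]

def IsSeparableOn (μ : Measure X) (B : Set X) : Prop :=
  ∃ D : Set (Set X), D.Countable ∧ (∀ C ∈ D, MeasurableSet C ∧ C ⊆ B) ∧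
    ∀ A : Set X, MeasurableSet A → A ⊆ B → ∀ ε : ℝ≥0∞, 0 < ε → ∃ C ∈ D, μ (A ∆ C) < ε

lemma isSeparableOn_univ_iff {μ : Measure X} :
    μ.IsSeparableOn univ ↔ ∃ D : Set (Set X), D.Countable ∧ (∀ B ∈ D, MeasurableSet B) ∧
      ∀ A : Set X, MeasurableSet A → ∀ ε : ℝ≥0∞, 0 < ε → ∃ B ∈ D, μ (A ∆ B) < ε := by
  simp only [IsSeparableOn, subset_univ, and_true, forall_const]

lemma IsSeparableOn.mono {μ : Measure X} {B S : Set X} (hB : μ.IsSeparableOn B)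
    (hS : MeasurableSet S) (hSB : S ⊆ B) : μ.IsSeparableOn S := by
  obtain ⟨D, hDc, hDm, hDd⟩ := hB
  refine ⟨(· ∩ S) '' D, hDc.image _, ?_, ?_⟩
  · rintro _ ⟨C, hC, rfl⟩
    exact ⟨(hDm C hC).1.inter hS, inter_subset_right⟩
  · intro A hA hAS ε hε
    obtain ⟨C, hC, hAC⟩ := hDd A hA (hAS.trans hSB) ε hε
    refine ⟨C ∩ S, mem_image_of_mem _ hC, ?_⟩
    calc μ (A ∆ (C ∩ S)) = μ (A ∆ C ∩ S) := by
          rw [inter_symmDiff_distrib_right, inter_eq_left.mpr hAS]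
      _ ≤ μ (A ∆ C) := measure_mono inter_subset_left
      _ < ε := hAC

lemma IsSeparableOn.of_uniformly_absolutelyContinuous {μ ν : Measure X} {B : Set X}
    (hν : ν.IsSeparableOn B)
    (hμν : ∀ ε : ℝ≥0∞, ε ≠ 0 → ∃ δ > 0, ∀ E : Set X, MeasurableSet E → E ⊆ B →
      ν E < δ → μ E < ε) :
    μ.IsSeparableOn B := by
  obtain ⟨D, hDc, hDm, hDd⟩ := hν
  refine ⟨D, hDc, hDm, fun A hA hAB ε hε => ?_⟩
  obtain ⟨δ, hδ, hsmall⟩ := hμν ε hε.ne'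
  obtain ⟨C, hC, hAC⟩ := hDd A hA hAB δ hδ
  exact ⟨C, hC, hsmall _ (hA.symmDiff (hDm C hC).1)
    (symmDiff_subset_union.trans (union_subset hAB (hDm C hC).2)) hAC⟩

lemma exists_pos_withDensity_lt_of_measure_lt {ν : Measure X} {f : X → ℝ≥0∞}
    (hf : ∫⁻ x, f x ∂ν ≠ ∞) {ε : ℝ≥0∞} (hε : ε ≠ 0) :
    ∃ δ > 0, ∀ E : Set X, MeasurableSet E → ν E < δ → ν.withDensity f E < ε := by
  obtain ⟨δ, hδ, hsmall⟩ := exists_pos_setLIntegral_lt_of_measure_lt hf hε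
  exact ⟨δ, hδ, fun E hE hνE => (withDensity_apply f hE).symm ▸ hsmall E hνE⟩

lemma restrict_le_withDensity_rnDeriv {μ ν : Measure X} [μ.HaveLebesgueDecomposition ν]
    {S : Set X} (hS : μ.singularPart ν S = 0) :
    μ.restrict S ≤ ν.withDensity (μ.rnDeriv ν) := by
  conv_lhs => rw [haveLebesgueDecomposition_add μ ν]
  rw [restrict_add, restrict_eq_zero.mpr hS, zero_add]
  exact restrict_le_self

end MeasureTheory.Measure

open MeasureTheory.Measure in
/-- If `ν` is a separable finite measure and `μ` is a nowhere separable finite measure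
(on the same measurable space), then `μ` and `ν` are mutually singular. -/
theorem nowhere_separable_singular_to_separable
    {X : Type u} [MeasurableSpace X] (μ ν : Measure X)
    [IsFiniteMeasure μ] [IsFiniteMeasure ν]
    (hsep : ∃ D : Set (Set X), D.Countable ∧ (∀ B ∈ D, MeasurableSet B) ∧
      ∀ A : Set X, MeasurableSet A → ∀ ε : ℝ≥0∞, 0 < ε → ∃ B ∈ D, ν (A ∆ B) < ε)
    (hnsep : ∀ B : Set X, MeasurableSet B → 0 < μ B →
      ¬ ∃ D : Set (Set X), D.Countable ∧ (∀ C ∈ D, MeasurableSet C ∧ C ⊆ B) ∧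
        ∀ A : Set X, MeasurableSet A → A ⊆ B →
          ∀ ε : ℝ≥0∞, 0 < ε → ∃ C ∈ D, μ (A ∆ C) < ε) :
    μ ⟂ₘ ν := by
  obtain ⟨S, hS, hμₛS, hνS⟩ := μ.mutuallySingular_singularPart ν
  refine ⟨S, hS, ?_, hνS⟩
  by_contra hμS
  have hμS_le := restrict_le_withDensity_rnDeriv hμₛS
  have hμ_ac : ∀ ε : ℝ≥0∞, ε ≠ 0 → ∃ δ > 0, ∀ E : Set X, MeasurableSet E → E ⊆ S →
      ν E < δ → μ E < ε := fun ε hε => by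
    obtain ⟨δ, hδ, hsmall⟩ :=
      exists_pos_withDensity_lt_of_measure_lt (lintegral_rnDeriv_lt_top μ ν).ne hε
    refine ⟨δ, hδ, fun E hE hES hνE => ?_⟩
    calc μ E = μ.restrict S E := (restrict_eq_self μ hES).symm
      _ ≤ ν.withDensity (μ.rnDeriv ν) E := hμS_le E
      _ < ε := hsmall E hE hνE
  exact hnsep S hS (pos_iff_ne_zero.mpr hμS)
    (((isSeparableOn_univ_iff.mpr hsep).mono hS (subset_univ S)).of_uniformly_absolutelyContinuous
      hμ_ac)
end
end
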